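/- arXiv:1106.3865 — 8 statements merged into one kernel-verified Lean document; each statement's English description precedes it below -/
import Mathlib

section
/- If U is uniformly distributed on [0,1], K > 0, and s ∈ ℝ, then E[exp(-2Ks²U(1-U))] ≤ (1 - exp(-Ks²/2))/(Ks²/2). -/
/-! Put `c = K s²`. On `[0, 1/2]` we have `2u(1 - u) ≥ u`, so there the integrand is at most
`exp (-c u)`.
The integrand is invariant under `u ↦ 1 - u`, hence its integral over `[0, 1]` is twice the
integral over `[0, 1/2]`, and `2 ∫₀^{1/2} exp (-c u) du = (1 - exp (-c/2)) / (c/2)`. -/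

open MeasureTheory Real

lemma integral_exp_neg_mul (c a : ℝ) (hc : c ≠ 0) :
    ∫ u in (0 : ℝ)..a, exp (-c * u) = (1 - exp (-c * a)) / c := by
  rw [intervalIntegral.integral_comp_mul_left exp (neg_ne_zero.2 hc), integral_exp,
    mul_zero, exp_zero, smul_eq_mul]
  field_simp
  ring

lemma integral_zero_one_eq_two_mul_of_symm {f : ℝ → ℝ} (hf : ∀ u, f (1 - u) = f u)
    (hint : IntervalIntegrable f volume 0 1) :
    ∫ u in (0 : ℝ)..1, f u = 2 * ∫ u in (0 : ℝ)..(1 / 2), f u := by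
  have hleft : IntervalIntegrable f volume 0 (1 / 2) :=
    hint.mono_set (Set.uIcc_subset_uIcc (by norm_num [Set.mem_uIcc]) (by norm_num [Set.mem_uIcc]))
  have hright : IntervalIntegrable f volume (1 / 2) 1 :=
    hint.mono_set (Set.uIcc_subset_uIcc (by norm_num [Set.mem_uIcc]) (by norm_num [Set.mem_uIcc]))
  have hreflect : ∫ u in (1 / 2 : ℝ)..1, f u = ∫ u in (0 : ℝ)..(1 / 2), f u :=
    calc ∫ u in (1 / 2 : ℝ)..1, f u = ∫ u in (1 / 2 : ℝ)..1, f (1 - u) := by simp only [hf]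
      _ = ∫ u in (0 : ℝ)..(1 / 2), f u := by
        rw [intervalIntegral.integral_comp_sub_left f 1]
        norm_num
  rw [← intervalIntegral.integral_add_adjacent_intervals hleft hright, hreflect, two_mul]

lemma integral_exp_neg_mul_mul_one_sub_le {c : ℝ} (hc : 0 < c) :
    ∫ u in (0 : ℝ)..1, exp (-2 * c * (u * (1 - u))) ≤ (1 - exp (-(c / 2))) / (c / 2) := by
  have hcont : Continuous fun u : ℝ => exp (-2 * c * (u * (1 - u))) := by fun_prop
  have hhalf : ∫ u in (0 : ℝ)..(1 / 2), exp (-2 * c * (u * (1 - u)))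
      ≤ ∫ u in (0 : ℝ)..(1 / 2), exp (-c * u) := by
    refine intervalIntegral.integral_mono_on (by norm_num) (hcont.intervalIntegrable _ _)
      ((by fun_prop : Continuous fun u : ℝ => exp (-c * u)).intervalIntegrable _ _) ?_
    rintro u ⟨hu0, hu⟩
    have hcu : 0 ≤ c * u * (1 - 2 * u) := mul_nonneg (mul_nonneg hc.le hu0) (by linarith)
    exact exp_le_exp.2 (by linarith)
  calc ∫ u in (0 : ℝ)..1, exp (-2 * c * (u * (1 - u)))
      = 2 * ∫ u in (0 : ℝ)..(1 / 2), exp (-2 * c * (u * (1 - u))) :=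
        integral_zero_one_eq_two_mul_of_symm (fun u => by ring_nf) (hcont.intervalIntegrable _ _)
    _ ≤ 2 * ∫ u in (0 : ℝ)..(1 / 2), exp (-c * u) := by gcongr
    _ = (1 - exp (-(c / 2))) / (c / 2) := by
        rw [integral_exp_neg_mul c _ hc.ne']
        field_simp

theorem fill_janson_laplace_bound (K s : ℝ) (hK : 0 < K) (hs : s ≠ 0) :
    ∫ u in Set.Icc (0 : ℝ) 1, Real.exp (-2 * K * s ^ 2 * (u * (1 - u)))
      ≤ (1 - Real.exp (-(K * s ^ 2 / 2))) / (K * s ^ 2 / 2) := by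
  rw [integral_Icc_eq_integral_Ioc, ← intervalIntegral.integral_of_le zero_le_one]
  convert integral_exp_neg_mul_mul_one_sub_le (c := K * s ^ 2) (by positivity) using 4
  ring
end

section
/- The function g(x) = 10x² + (2 - 6x)(1 + √(x² + 1)) is nonnegative for all x ∈ [0,1], with minimum value 0 attained at x = 3/4. -/
theorem g_nonneg_on_unit_interval :
    (∀ x ∈ Set.Icc (0 : ℝ) 1,
      0 ≤ 10 * x ^ 2 + (2 - 6 * x) * (1 + Real.sqrt (x ^ 2 + 1))) ∧
    10 * (3 / 4 : ℝ) ^ 2 + (2 - 6 * (3 / 4)) * (1 + Real.sqrt ((3 / 4 : ℝ) ^ 2 + 1)) = 0 := by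
  constructor
  · intro x hx
    obtain ⟨hx0, hx1⟩ := hx
    set s := Real.sqrt (x ^ 2 + 1) with hsdef
    have hsnn : 0 ≤ s := Real.sqrt_nonneg _
    have hs : s ^ 2 = x ^ 2 + 1 := Real.sq_sqrt (by positivity)
    rcases le_or_gt (6 * x) 2 with h | h
    · have h1 : 0 ≤ (2 - 6 * x) * (1 + s) := by
        apply mul_nonneg <;> nlinarith
      nlinarith
    · have key : (10 * x ^ 2 - 6 * x + 2) ^ 2 - ((6 * x - 2) * s) ^ 2
          = 4 * x ^ 2 * (4 * x - 3) ^ 2 := by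
        have : ((6 * x - 2) * s) ^ 2 = (6 * x - 2) ^ 2 * (x ^ 2 + 1) := by
          rw [mul_pow, hs]
        rw [this]; ring
      have hpos : 0 < 10 * x ^ 2 - 6 * x + 2 := by nlinarith [sq_nonneg (10 * x - 3)]
      nlinarith [sq_nonneg (x * (4 * x - 3)), mul_nonneg (sub_pos.mpr h).le hsnn]
  · have h : ((3 / 4 : ℝ) ^ 2 + 1) = (5 / 4) ^ 2 := by norm_num
    rw [h, Real.sqrt_sq (by norm_num : (0:ℝ) ≤ 5/4)]
    norm_num
end

section
/- Let f(x) = x⁴ + (x² - x³)(1 + √(x² + 1)). Let x₁ ≥ x₂ ≥ … ≥ x_b ≥ 0 and y₁ ≥ y₂ ≥ … ≥ y_{b+1} ≥ 0 with ∑_{i=1}^b x_i = ∑_{j=1}^{b+1} y_j = 1 and y_i ≤ x_i for all i ∈ {1,…,b}. Then ∑_{i=1}^{b+1} f(y_i) ≤ ∑_{i=1}^b f(x_i). -/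
/-!
The function `F` is convex on `[0, 1]` (its second derivative is nonnegative there) and `F 0 = 0`.
Put `t = y_{b+1}`. The gaps `x_i - y_i ≥ 0` add up to `t`, and each gap `[y_i, x_i]` lies to the
right of `[0, t]` because `t ≤ y_i`. Monotonicity of secant slopes of a convex function gives
`F x_i - F y_i ≥ (F t / t) (x_i - y_i)`, and summing over `i` yields
`F t ≤ ∑ (F x_i - F y_i)`, which is the claim.
-/

open Real Finset

namespace ConvexOn

variable {s : Set ℝ} {f : ℝ → ℝ}

theorem slope_le_slope (hf : ConvexOn ℝ s f) {a b c d : ℝ} (ha : a ∈ s) (hb : b ∈ s)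
    (hc : c ∈ s) (hd : d ∈ s) (hab : a < b) (hcd : c < d) (hac : a ≤ c) (hbd : b ≤ d) :
    slope f a b ≤ slope f c d :=
  calc slope f a b ≤ slope f a d :=
        hf.slope_mono ha ⟨hb, hab.ne'⟩ ⟨hd, (hab.trans_le hbd).ne'⟩ hbd
    _ = slope f d a := slope_comm f a d
    _ ≤ slope f d c :=
        hf.slope_mono hd ⟨ha, (hab.trans_le hbd).ne⟩ ⟨hc, hcd.ne⟩ hac
    _ = slope f c d := slope_comm f d c

theorem slope_mul_sub_le_sub (hf : ConvexOn ℝ s f) {a t x y : ℝ} (ha : a ∈ s) (ht : t ∈ s)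
    (hx : x ∈ s) (hy : y ∈ s) (hat : a < t) (hay : a ≤ y) (htx : t ≤ x) (hyx : y ≤ x) :
    slope f a t * (x - y) ≤ f x - f y := by
  rcases hyx.eq_or_lt with rfl | hyx
  · simp
  calc slope f a t * (x - y) ≤ slope f y x * (x - y) :=
        mul_le_mul_of_nonneg_right (hf.slope_le_slope ha ht hy hx hat hyx hay htx)
          (sub_nonneg.2 hyx.le)
    _ = f x - f y := by rw [slope_def_field]; field_simp [(sub_pos.2 hyx).ne']

theorem sub_le_sum_sub (hf : ConvexOn ℝ s f) {ι : Type*} (u : Finset ι) {a t : ℝ}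
    {x y : ι → ℝ} (ha : a ∈ s) (ht : t ∈ s) (hx : ∀ i ∈ u, x i ∈ s) (hy : ∀ i ∈ u, y i ∈ s)
    (hay : ∀ i ∈ u, a ≤ y i) (htx : ∀ i ∈ u, t ≤ x i) (hyx : ∀ i ∈ u, y i ≤ x i)
    (hsum : ∑ i ∈ u, (x i - y i) = t - a) :
    f t - f a ≤ ∑ i ∈ u, (f (x i) - f (y i)) := by
  have hgap : ∀ i ∈ u, 0 ≤ x i - y i := fun i hi => sub_nonneg.2 (hyx i hi)
  rcases (sub_nonneg.1 (hsum ▸ sum_nonneg hgap)).eq_or_lt with rfl | hat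
  · have hxy : ∀ i ∈ u, x i = y i := fun i hi => sub_eq_zero.1 <|
      (sum_eq_zero_iff_of_nonneg hgap).1 (hsum.trans (sub_self a)) i hi
    simp +contextual [hxy]
  calc f t - f a = slope f a t * ∑ i ∈ u, (x i - y i) := by
        rw [hsum, mul_comm, ← smul_eq_mul, sub_smul_slope, vsub_eq_sub]
    _ = ∑ i ∈ u, slope f a t * (x i - y i) := mul_sum _ _ _
    _ ≤ ∑ i ∈ u, (f (x i) - f (y i)) := sum_le_sum fun i hi =>
        hf.slope_mul_sub_le_sub ha ht (hx i hi) (hy i hi) hat (hay i hi) (htx i hi) (hyx i hi)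

end ConvexOn

open Real

noncomputable def F (x : ℝ) : ℝ := x ^ 4 + (x ^ 2 - x ^ 3) * (1 + √(x ^ 2 + 1))

noncomputable def F' (x : ℝ) : ℝ :=
  4 * x ^ 3 + (2 * x - 3 * x ^ 2) * (1 + √(x ^ 2 + 1)) + (x ^ 2 - x ^ 3) * (x / √(x ^ 2 + 1))

noncomputable def F'' (x : ℝ) : ℝ :=
  12 * x ^ 2 + (2 - 6 * x) * (1 + √(x ^ 2 + 1)) + 2 * (2 * x - 3 * x ^ 2) * (x / √(x ^ 2 + 1))
    + (x ^ 2 - x ^ 3) / √(x ^ 2 + 1) ^ 3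

lemma sqrt_sq_add_one_pos (x : ℝ) : 0 < √(x ^ 2 + 1) := sqrt_pos.2 (by positivity)

lemma hasDerivAt_sqrt_sq_add_one (x : ℝ) :
    HasDerivAt (fun x => √(x ^ 2 + 1)) (x / √(x ^ 2 + 1)) x := by
  refine (((hasDerivAt_pow 2 x).add_const 1).sqrt (by positivity)).congr_deriv ?_
  field_simp [(sqrt_sq_add_one_pos x).ne']
  ring

lemma hasDerivAt_div_sqrt_sq_add_one (x : ℝ) :
    HasDerivAt (fun x => x / √(x ^ 2 + 1)) (1 / √(x ^ 2 + 1) ^ 3) x := by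
  have hs := sqrt_sq_add_one_pos x
  refine ((hasDerivAt_id' x).fun_div (hasDerivAt_sqrt_sq_add_one x) hs.ne').congr_deriv ?_
  field_simp
  rw [sq_sqrt (by positivity)]
  ring

lemma hasDerivAt_F (x : ℝ) : HasDerivAt F (F' x) x := by
  refine ((hasDerivAt_pow 4 x).fun_add
    (((hasDerivAt_pow 2 x).fun_sub (hasDerivAt_pow 3 x)).fun_mul
      ((hasDerivAt_sqrt_sq_add_one x).const_add 1))).congr_deriv ?_
  simp only [F']
  ring

lemma hasDerivAt_F' (x : ℝ) : HasDerivAt F' (F'' x) x := by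
  refine ((((hasDerivAt_pow 3 x).const_mul 4).fun_add
    ((((hasDerivAt_id' x).const_mul 2).fun_sub ((hasDerivAt_pow 2 x).const_mul 3)).fun_mul
      ((hasDerivAt_sqrt_sq_add_one x).const_add 1))).fun_add
    (((hasDerivAt_pow 2 x).fun_sub (hasDerivAt_pow 3 x)).fun_mul
      (hasDerivAt_div_sqrt_sq_add_one x))).congr_deriv ?_
  simp only [F'']
  field_simp [(sqrt_sq_add_one_pos x).ne']
  ring

lemma F''_nonneg {x : ℝ} (hx0 : 0 ≤ x) (hx1 : x ≤ 1) : 0 ≤ F'' x := by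
  set s := √(x ^ 2 + 1) with hs
  have hsp : 0 < s := sqrt_sq_add_one_pos x
  have hs2 : s ^ 2 = x ^ 2 + 1 := sq_sqrt (by positivity)
  have hs1 : 1 ≤ s := by nlinarith
  have hsle : s ≤ 3 / 2 := by nlinarith
  have hcleared : F'' x * s ^ 3 = 12 * x ^ 2 * s ^ 3 + (2 - 6 * x) * (s ^ 3 + s ^ 4)
      + 2 * (2 * x - 3 * x ^ 2) * x * s ^ 2 + (x ^ 2 - x ^ 3) := by
    simp only [F'', ← hs]
    field_simp
  have hnumerator : 0 ≤ 12 * x ^ 2 * s ^ 3 + (2 - 6 * x) * (s ^ 3 + s ^ 4)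
      + 2 * (2 * x - 3 * x ^ 2) * x * s ^ 2 + (x ^ 2 - x ^ 3) := by
    have h3 : s ^ 3 = s * (x ^ 2 + 1) := by rw [pow_succ', hs2]
    have h4 : s ^ 4 = (x ^ 2 + 1) ^ 2 := by rw [← hs2]; ring
    rw [h3, h4, hs2]
    nlinarith [sq_nonneg (x * (1 - x)), sq_nonneg x, sq_nonneg (1 - x),
      mul_nonneg hx0 (sub_nonneg.2 hx1), mul_nonneg (mul_nonneg hx0 hx0) (sub_nonneg.2 hsle),
      sq_nonneg (x - 1 / 2), mul_nonneg (mul_nonneg hx0 hx0) (sub_nonneg.2 hs1)]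
  nlinarith [pow_pos hsp 3]

lemma convexOn_F : ConvexOn ℝ (Set.Icc 0 1) F := by
  apply convexOn_of_hasDerivWithinAt2_nonneg (f' := F') (f'' := F'') (convex_Icc 0 1)
  · exact fun t _ => (hasDerivAt_F t).continuousAt.continuousWithinAt
  · exact fun t _ => (hasDerivAt_F t).hasDerivWithinAt
  · exact fun t _ => (hasDerivAt_F' t).hasDerivWithinAt
  · rw [interior_Icc]
    exact fun t ht => F''_nonneg ht.1.le ht.2.le

lemma F_zero : F 0 = 0 := by simp [F]

lemma mem_Icc_of_sum_eq_one {ι : Type*} [Fintype ι] {v : ι → ℝ} (hnn : ∀ i, 0 ≤ v i)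
    (hsum : ∑ i, v i = 1) (i : ι) : v i ∈ Set.Icc 0 1 :=
  ⟨hnn i, hsum ▸ single_le_sum (fun j _ => hnn j) (mem_univ i)⟩

theorem majorization_sum_f_le_general (b : ℕ) (x : Fin b → ℝ) (y : Fin (b + 1) → ℝ)
    (hymono : ∀ i j : Fin (b + 1), i ≤ j → y j ≤ y i)
    (hxnn : ∀ i, 0 ≤ x i) (hynn : ∀ i, 0 ≤ y i)
    (hxsum : ∑ i, x i = 1) (hysum : ∑ j, y j = 1)
    (hle : ∀ i : Fin b, y (Fin.castSucc i) ≤ x i) :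
    (∑ j, (y j ^ 4 + (y j ^ 2 - y j ^ 3) * (1 + Real.sqrt (y j ^ 2 + 1))))
      ≤ ∑ i, (x i ^ 4 + (x i ^ 2 - x i ^ 3) * (1 + Real.sqrt (x i ^ 2 + 1))) := by
  change ∑ j, F (y j) ≤ ∑ i, F (x i)
  have hxI := mem_Icc_of_sum_eq_one hxnn hxsum
  have hyI := mem_Icc_of_sum_eq_one hynn hysum
  rw [Fin.sum_univ_castSucc] at hysum ⊢
  set t := y (Fin.last b)
  have hyt : ∀ i : Fin b, t ≤ y i.castSucc := fun i => hymono _ _ (Fin.le_last _)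
  have hgaps : ∑ i, (x i - y i.castSucc) = t - 0 := by
    rw [sum_sub_distrib]
    linarith
  have key := convexOn_F.sub_le_sum_sub univ (by simp) (hyI _) (fun i _ => hxI i)
    (fun i _ => hyI _) (fun i _ => hynn _) (fun i _ => (hyt i).trans (hle i)) (fun i _ => hle i)
    hgaps
  rw [F_zero, sum_sub_distrib] at key
  linarith

theorem majorization_sum_f_le (b : ℕ) (hb : 1 ≤ b) (x : Fin b → ℝ) (y : Fin (b + 1) → ℝ)
    (hxmono : ∀ i j : Fin b, i ≤ j → x j ≤ x i)
    (hymono : ∀ i j : Fin (b + 1), i ≤ j → y j ≤ y i)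
    (hxnn : ∀ i, 0 ≤ x i) (hynn : ∀ i, 0 ≤ y i)
    (hxsum : ∑ i, x i = 1) (hysum : ∑ j, y j = 1)
    (hle : ∀ i : Fin b, y (Fin.castSucc i) ≤ x i) :
    (∑ j, (y j ^ 4 + (y j ^ 2 - y j ^ 3) * (1 + Real.sqrt (y j ^ 2 + 1))))
      ≤ ∑ i, (x i ^ 4 + (x i ^ 2 - x i ^ 3) * (1 + Real.sqrt (x i ^ 2 + 1))) :=
  majorization_sum_f_le_general b x y hymono hxnn hynn hxsum hysum hle
end

section
/- Let f : [0,1] → ℝ be a differentiable convex function with f(0) = 0 and f' monotone increasing. Suppose x_i = y_i + α_i·y for i = 1,…,b with α_i ≥ 0, ∑α_i = 1, 0 ≤ y ≤ y_i ≤ x_i ≤ 1. Then ∑_{i=1}^b f(x_i) ≥ ∑_{i=1}^b f(y_i) + f(y). -/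
theorem convex_increment_lemma (f : ℝ → ℝ)
    (hdiff : ∀ t ∈ Set.Icc (0 : ℝ) 1, DifferentiableAt ℝ f t)
    (hconv : ConvexOn ℝ (Set.Icc (0 : ℝ) 1) f)
    (hf0 : f 0 = 0)
    (hderiv : MonotoneOn (deriv f) (Set.Icc (0 : ℝ) 1))
    (b : ℕ) (x y α : Fin b → ℝ) (z : ℝ)
    (hα : ∀ i, 0 ≤ α i) (hαsum : ∑ i, α i = 1)
    (hx : ∀ i, x i = y i + α i * z)
    (hz : 0 ≤ z) (hzy : ∀ i, z ≤ y i) (hyx : ∀ i, y i ≤ x i) (hx1 : ∀ i, x i ≤ 1) :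
    (∑ i, f (y i)) + f z ≤ ∑ i, f (x i) := by
  have key : ∀ i, f (y i) + α i * f z ≤ f (x i) := by
    intro i
    have hd : x i - y i = α i * z := by rw [hx i]; ring
    rcases eq_or_lt_of_le (hyx i) with heq | hlt
    · have h0 : α i * z = 0 := by rw [← hd, ← heq]; ring
      rcases mul_eq_zero.mp h0 with h | h
      · rw [heq, h]; simp
      · rw [heq, h, hf0]; simp
    · have hαz : 0 < α i * z := by linarith
      have hzpos : 0 < z := lt_of_le_of_ne hz (by rintro rfl; simp at hαz)
      -- memberships
      have h0m : (0 : ℝ) ∈ Set.Icc (0 : ℝ) 1 := by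
        constructor <;> norm_num
      have hzm : z ∈ Set.Icc (0 : ℝ) 1 := ⟨hz, by linarith [hzy i, hyx i, hx1 i]⟩
      have hym : y i ∈ Set.Icc (0 : ℝ) 1 := ⟨by linarith [hzy i], by linarith [hx1 i]⟩
      have hxm : x i ∈ Set.Icc (0 : ℝ) 1 := ⟨by linarith [hzy i], hx1 i⟩
      have hzxi : z < x i := lt_of_le_of_lt (hzy i) hlt
      -- secant through z: slope(0,z) ≤ slope(z, x i)
      have s1 := hconv.secant_mono hzm h0m hxm (by linarith : (0:ℝ) ≠ z)
        (ne_of_gt hzxi) (by linarith : (0:ℝ) ≤ x i)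
      -- secant through x i: slope(z, x i) ≤ slope(y i, x i)
      have s2 := hconv.secant_mono hxm hzm hym (ne_of_lt hzxi)
        (ne_of_lt hlt) (hzy i)
      rw [hf0] at s1
      have e1 : (0 - f z) / (0 - z) = f z / z := by
        rw [zero_sub, zero_sub, neg_div_neg_eq]
      rw [e1] at s1
      have e2 : (f z - f (x i)) / (z - x i) = (f (x i) - f z) / (x i - z) := by
        rw [← neg_div_neg_eq]; ring_nf
      have e3 : (f (y i) - f (x i)) / (y i - x i) = (f (x i) - f (y i)) / (x i - y i) := by
        rw [← neg_div_neg_eq]; ring_nf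
      rw [e2, e3] at s2
      have chain : f z / z ≤ (f (x i) - f (y i)) / (x i - y i) := le_trans s1 s2
      have hdpos : 0 < x i - y i := by linarith
      have := (div_le_div_iff₀ hzpos hdpos).mp chain
      -- f z * (x i - y i) ≤ (f (x i) - f (y i)) * z
      rw [hd] at this
      have hz' : z ≠ 0 := ne_of_gt hzpos
      nlinarith [this]
  calc (∑ i, f (y i)) + f z = ∑ i, (f (y i) + α i * f z) := by
        rw [Finset.sum_add_distrib, ← Finset.sum_mul, hαsum, one_mul]
    _ ≤ ∑ i, f (x i) := Finset.sum_le_sum fun i _ => key i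
end

section
/- Let a > 0, D > 0 with 1 + a·(5/7) ≤ 1 + a (where a = D²γ²(e^{2/γ}-1-2/γ)), and K = (5/2)D²γ². Then for all s ∈ [0, 1/(γD)]: (1 + s²D²γ²·(5/7))·(1 - (1/3)Ks² + (1/15)K²s⁴) ≤ 1. -/
theorem key_polynomial_inequality (γ D : ℝ) (hγ : 0 < γ)
    (hγeq : Real.exp (2 / γ) - 1 - 2 / γ = 5 / 7) (hD : 0 < D) :
    ∀ s : ℝ, s ∈ Set.Icc 0 (1 / (γ * D)) →
      (1 + s ^ 2 * D ^ 2 * γ ^ 2 * (5 / 7)) *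
        (1 - (1 / 3) * ((5 / 2) * D ^ 2 * γ ^ 2) * s ^ 2
          + (1 / 15) * ((5 / 2) * D ^ 2 * γ ^ 2) ^ 2 * s ^ 4) ≤ 1 := by
  intro s hs
  obtain ⟨h0, h1⟩ := hs
  have hγD : 0 < γ * D := mul_pos hγ hD
  have hsle : s * (γ * D) ≤ 1 := by
    rw [le_div_iff₀ hγD] at h1; linarith
  set x : ℝ := s ^ 2 * D ^ 2 * γ ^ 2 with hx
  have hx0 : 0 ≤ x := by positivity
  have hx1 : x ≤ 1 := by
    have : x = (s * (γ * D)) ^ 2 := by ring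
    rw [this]
    nlinarith [mul_nonneg h0 hγD.le]
  have key : (1 + x * (5 / 7)) * (1 - (5 / 6) * x + (5 / 12) * x ^ 2) ≤ 1 := by
    nlinarith [mul_nonneg hx0 (mul_nonneg hx0 hx0), sq_nonneg x]
  calc (1 + s ^ 2 * D ^ 2 * γ ^ 2 * (5 / 7)) *
        (1 - (1 / 3) * ((5 / 2) * D ^ 2 * γ ^ 2) * s ^ 2
          + (1 / 15) * ((5 / 2) * D ^ 2 * γ ^ 2) ^ 2 * s ^ 4)
      = (1 + x * (5 / 7)) * (1 - (5 / 6) * x + (5 / 12) * x ^ 2) := by rw [hx]; ring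
    _ ≤ 1 := key
end

section
/- Let X be a real random vector in ℝ^k with ‖X‖ ≤ D almost surely and E[X] = 0, and let γ > 0. Then for all s ∈ ℝ^k with ‖s‖ ≤ 1/(γD), E[exp(2⟨s,X⟩)] ≤ 1 + ‖s‖²D²γ²(e^{2/γ} - 1 - 2/γ). -/
/-!
Writing `exp u = 1 + u + ∑_{n ≥ 2} uⁿ/n!` and bounding `|u|ⁿ ≤ u² mⁿ⁻²` termwise gives
`exp u ≤ 1 + u + (u/m)² (eᵐ - 1 - m)` whenever `|u| ≤ m`. Apply this to `u = 2⟨s, X⟩`, which is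
bounded by `2‖s‖D ≤ 2/γ`, and integrate: the linear term vanishes because `X` is centred.
-/

open MeasureTheory

theorem Real.hasSum_exp_sub_one_sub (x : ℝ) :
    HasSum (fun n : ℕ => x ^ (n + 2) / (n + 2).factorial) (Real.exp x - 1 - x) := by
  have h := (hasSum_nat_add_iff' 2).mpr (Real.exp_eq_exp_ℝ ▸ NormedSpace.expSeries_div_hasSum_exp x)
  simpa [Finset.sum_range_succ, sub_sub] using h

theorem Real.exp_sub_one_sub_le_sq_div_mul {u m : ℝ} (hm : 0 < m) (hu : |u| ≤ m) :
    Real.exp u - 1 - u ≤ (u / m) ^ 2 * (Real.exp m - 1 - m) := by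
  refine hasSum_le (fun n => ?_) (Real.hasSum_exp_sub_one_sub u)
    ((Real.hasSum_exp_sub_one_sub m).mul_left _)
  rw [← mul_div_assoc]
  gcongr
  calc u ^ (n + 2) = u ^ 2 * u ^ n := by ring
    _ ≤ u ^ 2 * |u| ^ n :=
        mul_le_mul_of_nonneg_left ((le_abs_self _).trans (abs_pow u n).le) (sq_nonneg u)
    _ ≤ u ^ 2 * m ^ n := by gcongr
    _ = (u / m) ^ 2 * m ^ (n + 2) := by field_simp; ring

theorem integral_exp_le_of_abs_le_of_integral_eq_zero {Ω : Type*} [MeasurableSpace Ω]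
    {μ : Measure Ω} [IsProbabilityMeasure μ] {Y : Ω → ℝ} (hY : AEStronglyMeasurable Y μ)
    {c m : ℝ} (hm : 0 < m) (hcm : c ≤ m) (hbound : ∀ᵐ ω ∂μ, |Y ω| ≤ c)
    (hmean : ∫ ω, Y ω ∂μ = 0) :
    ∫ ω, Real.exp (Y ω) ∂μ ≤ 1 + (c / m) ^ 2 * (Real.exp m - 1 - m) := by
  set K := (c / m) ^ 2 * (Real.exp m - 1 - m)
  have hYint : Integrable Y μ := Integrable.of_bound hY c hbound
  have hlin_int : Integrable (fun ω => 1 + Y ω) μ := (integrable_const 1).add hYint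
  have hpointwise : ∀ᵐ ω ∂μ, Real.exp (Y ω) ≤ 1 + Y ω + K := by
    filter_upwards [hbound] with ω hω
    have hsq : (Y ω / m) ^ 2 ≤ (c / m) ^ 2 := by
      rw [← sq_abs, abs_div, abs_of_pos hm]
      gcongr
    have hK : 0 ≤ Real.exp m - 1 - m := by linarith [Real.add_one_le_exp m]
    linarith [Real.exp_sub_one_sub_le_sq_div_mul hm (hω.trans hcm),
      mul_le_mul_of_nonneg_right hsq hK]
  calc ∫ ω, Real.exp (Y ω) ∂μ ≤ ∫ ω, (1 + Y ω + K) ∂μ :=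
        integral_mono_of_nonneg (.of_forall fun ω => (Real.exp_pos _).le)
          (hlin_int.add (integrable_const K)) hpointwise
    _ = 1 + K := by
        rw [integral_add hlin_int (integrable_const K),
          integral_add (integrable_const 1) hYint, hmean]
        simp

theorem mgf_bound_bounded_centered_vector
    {Ω : Type*} [MeasureSpace Ω] [IsProbabilityMeasure (volume : Measure Ω)]
    (k : ℕ) (X : Ω → EuclideanSpace ℝ (Fin k)) (hX : Measurable X)
    (D γ : ℝ) (hD : 0 < D) (hγ : 0 < γ)
    (hbound : ∀ᵐ ω, ‖X ω‖ ≤ D)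
    (hmean : ∫ ω, X ω = 0) :
    ∀ s : EuclideanSpace ℝ (Fin k), ‖s‖ ≤ 1 / (γ * D) →
      ∫ ω, Real.exp (2 * (inner ℝ s (X ω) : ℝ))
        ≤ 1 + ‖s‖ ^ 2 * D ^ 2 * γ ^ 2 * (Real.exp (2 / γ) - 1 - 2 / γ) := by
  intro s hs
  have hXint : Integrable X := Integrable.of_bound hX.aestronglyMeasurable D hbound
  have hsD : 2 * (‖s‖ * D) ≤ 2 / γ := by
    rw [le_div_iff₀ (by positivity)] at hs
    rw [le_div_iff₀ hγ]
    linarith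
  have hinner_bound : ∀ᵐ ω, |2 * inner ℝ s (X ω)| ≤ 2 * (‖s‖ * D) := by
    filter_upwards [hbound] with ω hω
    rw [abs_mul, abs_two]
    gcongr
    exact (abs_real_inner_le_norm s (X ω)).trans (by gcongr)
  have hinner_mean : ∫ ω, 2 * inner ℝ s (X ω) = 0 := by
    rw [integral_const_mul, integral_inner hXint, hmean, inner_zero_right, mul_zero]
  convert integral_exp_le_of_abs_le_of_integral_eq_zero
    ((measurable_const.inner hX).const_mul 2).aestronglyMeasurable (by positivity) hsD
    hinner_bound hinner_mean using 2
  field_simp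
end

section
/- For M with 0.42 ≤ M ≤ L₀ (where L₀ ≈ 5.0177 is the largest root of e^L = 6L²) and for all λ with 0.42 ≤ |λ| ≤ M: e^{|λ|}·(1 - exp(-6λ²))/(6λ²) ≤ 1. -/
/-!
Write `x = |λ|`. Wherever `exp x ≤ 6 x²` the claim is immediate, since `1 - exp (-6 x²) ≤ 1`;
as `log (6 x²) - x` is concave on `(0, ∞)`, this holds on all of `[0.65, L₀]` because it holds at
both endpoints. On `[0.42, 0.65]` we bound `exp (-x)` and `exp (-6 x²) = exp (-3 x²) ^ 2` from
below by cubic Taylor polynomials, which leaves a polynomial inequality of degree 12.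
-/

open Real Set

lemma exp_le_quadratic_of_nonpos {y : ℝ} (hy : y ≤ 0) : exp y ≤ 1 + y + y ^ 2 / 2 := by
  have hderiv (z : ℝ) :
      HasDerivAt (fun w => exp w - (1 + w + w ^ 2 / 2)) (exp z - (1 + z)) z :=
    ((hasDerivAt_exp z).sub (((hasDerivAt_id z).const_add 1).add
      ((hasDerivAt_pow 2 z).div_const 2))).congr_deriv (by norm_num)
  have hmono : Monotone (fun w => exp w - (1 + w + w ^ 2 / 2)) :=
    monotone_of_hasDerivAt_nonneg hderiv fun z => sub_nonneg.2 (by linarith [add_one_le_exp z])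
  simpa using hmono hy

lemma cubic_le_exp_of_nonpos {y : ℝ} (hy : y ≤ 0) : 1 + y + y ^ 2 / 2 + y ^ 3 / 6 ≤ exp y := by
  have hderiv (z : ℝ) : HasDerivAt (fun w => exp w - (1 + w + w ^ 2 / 2 + w ^ 3 / 6))
      (exp z - (1 + z + z ^ 2 / 2)) z :=
    ((hasDerivAt_exp z).sub ((((hasDerivAt_id z).const_add 1).add
      ((hasDerivAt_pow 2 z).div_const 2)).add ((hasDerivAt_pow 3 z).div_const 6))).congr_deriv
      (by norm_num; ring)
  have hanti : AntitoneOn (fun w => exp w - (1 + w + w ^ 2 / 2 + w ^ 3 / 6)) (Iic 0) := by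
    refine antitoneOn_of_hasDerivWithinAt_nonpos (convex_Iic 0)
      (fun z _ => (hderiv z).continuousAt.continuousWithinAt)
      (fun z _ => (hderiv z).hasDerivWithinAt) fun z hz => ?_
    rw [interior_Iic] at hz
    linarith [exp_le_quadratic_of_nonpos hz.out.le]
  simpa using hanti hy self_mem_Iic hy

lemma exp_mul_cubic_le_one {x : ℝ} (hx : 0 ≤ x) :
    exp x * (1 - x + x ^ 2 / 2 - x ^ 3 / 6) ≤ 1 := by
  have hcubic : 1 - x + x ^ 2 / 2 - x ^ 3 / 6 ≤ exp (-x) := by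
    linarith [cubic_le_exp_of_nonpos (neg_nonpos.2 hx)]
  calc exp x * (1 - x + x ^ 2 / 2 - x ^ 3 / 6) ≤ exp x * exp (-x) := by gcongr
    _ = 1 := by rw [← exp_add, add_neg_cancel, exp_zero]

lemma exp_le_mul_pow_of_mem_Icc {a b x c : ℝ} (n : ℕ) (ha : 0 < a) (hx : x ∈ Icc a b)
    (hea : exp a ≤ c * a ^ n) (heb : exp b ≤ c * b ^ n) : exp x ≤ c * x ^ n := by
  have hc : 0 < c := pos_of_mul_pos_left ((exp_pos a).trans_le hea) (by positivity)
  have hconc : ConcaveOn ℝ (Ioi 0) fun y => n * log y + log c - y :=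
    ((strictConcaveOn_log_Ioi.concaveOn.smul (Nat.cast_nonneg n)).add_const (log c)).sub
      (convexOn_id (convex_Ioi 0))
  have hiff {y : ℝ} (hy : 0 < y) : exp y ≤ c * y ^ n ↔ 0 ≤ n * log y + log c - y := by
    rw [← le_log_iff_exp_le (by positivity), log_mul hc.ne' (pow_pos hy n).ne', log_pow,
      sub_nonneg, add_comm]
  have hb : 0 < b := ha.trans_le (hx.1.trans hx.2)
  exact (hiff (ha.trans_le hx.1)).2 <|
    (le_min ((hiff ha).1 hea) ((hiff hb).1 heb)).trans (hconc.min_le_of_mem_Icc ha hb hx)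

lemma exp_mul_one_sub_exp_neg_le_of_mem_Icc {x : ℝ} (hx : x ∈ Icc 0.42 0.65) :
    exp x * (1 - exp (-(6 * x ^ 2))) ≤ 6 * x ^ 2 := by
  obtain ⟨hx₁, hx₂⟩ := hx
  set s := 3 * x ^ 2 with hs
  have hs₀ : 0 ≤ s := by positivity
  have hs₁ : s ≤ 3 / 2 := by nlinarith
  have hQ : 0 ≤ 1 - s + s ^ 2 / 2 - s ^ 3 / 6 := by
    nlinarith [sq_nonneg (1 - s / 2), mul_nonneg (sq_nonneg s) (sub_nonneg.2 hs₁)]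
  have hexp : (1 - s + s ^ 2 / 2 - s ^ 3 / 6) ^ 2 ≤ exp (-(6 * x ^ 2)) := by
    have hcubic : 1 - s + s ^ 2 / 2 - s ^ 3 / 6 ≤ exp (-s) := by
      linarith [cubic_le_exp_of_nonpos (neg_nonpos.2 hs₀)]
    rw [show -(6 * x ^ 2) = -s + -s by ring, exp_add, sq]
    exact mul_le_mul hcubic hcubic hQ (exp_pos _).le
  -- The difference of the two sides of `hpoly` (degree 12) has positive Bernstein coefficients
  -- on `[0.42, 0.65]`, i.e. it is a positive combination of these products.
  have hbern (k : ℕ) : 0 ≤ (x - 0.42) ^ k * (0.65 - x) ^ (12 - k) := by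
    have : 0 ≤ x - 0.42 := by linarith
    have : 0 ≤ 0.65 - x := by linarith
    positivity
  have hpoly :
      1 - (1 - s + s ^ 2 / 2 - s ^ 3 / 6) ^ 2 ≤ 6 * x ^ 2 * (1 - x + x ^ 2 / 2 - x ^ 3 / 6) := by
    rw [hs]
    linarith [hbern 0, hbern 1, hbern 2, hbern 3, hbern 4, hbern 5, hbern 6, hbern 7, hbern 8,
      hbern 9, hbern 10, hbern 11, hbern 12]
  calc exp x * (1 - exp (-(6 * x ^ 2)))
      ≤ exp x * (6 * x ^ 2 * (1 - x + x ^ 2 / 2 - x ^ 3 / 6)) := by gcongr; linarith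
    _ = 6 * x ^ 2 * (exp x * (1 - x + x ^ 2 / 2 - x ^ 3 / 6)) := by ring
    _ ≤ 6 * x ^ 2 := mul_le_of_le_one_right (by positivity) (exp_mul_cubic_le_one (by linarith))

lemma exp_le_six_mul_sq_of_mem_Icc {L x : ℝ} (hL : exp L = 6 * L ^ 2) (hx : x ∈ Icc 0.65 L) :
    exp x ≤ 6 * x ^ 2 := by
  have h065 : exp 0.65 ≤ 6 * 0.65 ^ 2 := by
    have := exp_mul_cubic_le_one (x := 0.65) (by norm_num)
    norm_num at this ⊢
    linarith
  exact exp_le_mul_pow_of_mem_Icc 2 (by norm_num) hx h065 hL.le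

theorem fill_janson_K12_case_general (L₀ : ℝ)
    (hroot : Real.exp L₀ = 6 * L₀ ^ 2) :
    ∀ M : ℝ, 0.42 ≤ M → M ≤ L₀ →
      ∀ l : ℝ, 0.42 ≤ |l| → |l| ≤ M →
        Real.exp |l| * (1 - Real.exp (-(6 * l ^ 2))) / (6 * l ^ 2) ≤ 1 := by
  intro M _ hML l hl hlM
  have hl₀ : l ≠ 0 := abs_pos.1 (lt_of_lt_of_le (by norm_num) hl)
  rw [div_le_one (by positivity), ← sq_abs l]
  rcases le_or_gt |l| 0.65 with hsmall | hlarge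
  · exact exp_mul_one_sub_exp_neg_le_of_mem_Icc ⟨hl, hsmall⟩
  · have hexp := exp_le_six_mul_sq_of_mem_Icc hroot ⟨hlarge.le, hlM.trans hML⟩
    exact (mul_le_of_le_one_right (exp_pos _).le (sub_le_self _ (exp_pos _).le)).trans hexp

theorem fill_janson_K12_case (L₀ : ℝ)
    (hroot : Real.exp L₀ = 6 * L₀ ^ 2)
    (hmax : ∀ L : ℝ, Real.exp L = 6 * L ^ 2 → L ≤ L₀) :
    ∀ M : ℝ, 0.42 ≤ M → M ≤ L₀ →
      ∀ l : ℝ, 0.42 ≤ |l| → |l| ≤ M →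
        Real.exp |l| * (1 - Real.exp (-(6 * l ^ 2))) / (6 * l ^ 2) ≤ 1 :=
  fill_janson_K12_case_general L₀ hroot
end

section
/- Let b ≥ 2 and let J_{n,1} be uniformly distributed on {0,1,…,n-1} with J_{n,2} = n - 1 - J_{n,1}. Then for the function f(x) = x⁴ + (x²-x³)(1+√(x²+1)), the random variable f(J_{n,1}/n) + f(J_{n,2}/n) is stochastically dominated by 1 - U(1-U), where U is uniform on [0,1]. -/
open MeasureTheory Classical

noncomputable def opNormSq (x : ℝ) : ℝ :=
  x ^ 4 + (x ^ 2 - x ^ 3) * (1 + Real.sqrt (x ^ 2 + 1))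

/-!
Writing `x = j/n` and `y = 1 - (j+1)/n`, the bound `√(x² + 1) ≤ 1 + x²/2` gives
`f x ≤ x - x(1 - x)/2` on `[0, 1]`, hence `f x + f y ≤ 1 - (1 - x)(1 - y)` because
`x(1 - x) + y(1 - y) ≥ 2xy` when `x + y ≤ 1`. For every `u ∈ [x, 1 - y] = [j/n, (j+1)/n]`
this is at most `1 - u(1 - u)`, so the atom `j` of the discrete law is matched with the
interval `(j/n, (j+1)/n)` of values of `U`, which has the same probability `1/n`; these
intervals are disjoint.
-/

lemma Real.sqrt_sq_add_one_le (x : ℝ) : √(x ^ 2 + 1) ≤ 1 + x ^ 2 / 2 :=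
  (Real.sqrt_le_left (by positivity)).2 (by nlinarith [sq_nonneg (x ^ 2)])

lemma opNormSq_le (x : ℝ) (hx₀ : 0 ≤ x) (hx₁ : x ≤ 1) :
    opNormSq x ≤ x - x * (1 - x) / 2 := by
  have hcoef : 0 ≤ x ^ 2 - x ^ 3 := by nlinarith [mul_nonneg (sq_nonneg x) (sub_nonneg.2 hx₁)]
  have hgap : 0 ≤ x * (1 - x) ^ 2 * (x ^ 2 - x + 1) / 2 := by
    have : 0 ≤ x ^ 2 - x + 1 := by nlinarith [sq_nonneg (x - 1 / 2)]
    positivity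
  calc opNormSq x ≤ x ^ 4 + (x ^ 2 - x ^ 3) * (1 + (1 + x ^ 2 / 2)) := by
        unfold opNormSq
        gcongr
        exact Real.sqrt_sq_add_one_le x
    _ = x - x * (1 - x) / 2 - x * (1 - x) ^ 2 * (x ^ 2 - x + 1) / 2 := by ring
    _ ≤ x - x * (1 - x) / 2 := by linarith

lemma opNormSq_add_le (x y : ℝ) (hx : 0 ≤ x) (hy : 0 ≤ y) (hxy : x + y ≤ 1) :
    opNormSq x + opNormSq y ≤ 1 - (1 - x) * (1 - y) := by
  have hfx := opNormSq_le x hx (by linarith)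
  have hfy := opNormSq_le y hy (by linarith)
  linarith [mul_le_mul_of_nonneg_left (show y ≤ 1 - x by linarith) hx,
    mul_le_mul_of_nonneg_left (show x ≤ 1 - y by linarith) hy]

lemma opNormSq_add_le_one_sub_mul (x y u : ℝ) (hx : 0 ≤ x) (hy : 0 ≤ y)
    (hu : u ∈ Set.Icc x (1 - y)) :
    opNormSq x + opNormSq y ≤ 1 - u * (1 - u) := by
  have hprod : u * (1 - u) ≤ (1 - y) * (1 - x) :=
    mul_le_mul hu.2 (by linarith [hu.1]) (by linarith [hu.1, hu.2]) (by linarith [hu.1, hu.2])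
  linarith [opNormSq_add_le x y hx hy (by linarith [hu.1, hu.2])]

lemma card_div_le_volume_real {S : Finset ℕ} {n : ℕ} {T : Set ℝ} (hT : volume T ≠ ⊤)
    (hS : ∀ j ∈ S, Set.Ioo ((j : ℝ) / n) ((j + 1) / n) ⊆ T) :
    (S.card : ℝ) / n ≤ volume.real T := by
  rcases Nat.eq_zero_or_pos n with rfl | hn
  · simp
  have hdisj : (S : Set ℕ).PairwiseDisjoint fun j : ℕ => Set.Ioo ((j : ℝ) / n) ((j + 1) / n) := by
    have hmono : Monotone fun j : ℕ => (j : ℝ) / n := fun i j hij =>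
      div_le_div_of_nonneg_right (by exact_mod_cast hij) n.cast_nonneg
    simpa [Set.PairwiseDisjoint] using
      hmono.pairwise_disjoint_on_Ioo_succ.set_pairwise (S : Set ℕ)
  calc (S.card : ℝ) / n = ∑ j ∈ S, (1 / n : ℝ) := by simp [div_eq_mul_inv]
    _ = ∑ j ∈ S, volume.real (Set.Ioo ((j : ℝ) / n) ((j + 1) / n)) := by
        refine Finset.sum_congr rfl fun j _ => ?_
        rw [Real.volume_real_Ioo_of_le (by gcongr; linarith)]
        ring
    _ = volume.real (⋃ j ∈ S, Set.Ioo ((j : ℝ) / n) ((j + 1) / n)) :=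
        (measureReal_biUnion_finset hdisj (fun _ _ => measurableSet_Ioo)
          fun _ _ => measure_Ioo_lt_top.ne).symm
    _ ≤ volume.real T := measureReal_mono (Set.iUnion₂_subset hS) hT

lemma opNormSq_add_le_of_mem_Ioo {n j : ℕ} (hj : j < n) {u : ℝ}
    (hu : u ∈ Set.Ioo ((j : ℝ) / n) ((j + 1) / n)) :
    opNormSq ((j : ℝ) / n) + opNormSq (((n - 1 - j : ℕ) : ℝ) / n) ≤ 1 - u * (1 - u) := by
  have hn : (0 : ℝ) < n := by exact_mod_cast hj.trans_le' j.zero_le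
  have hcomp : ((n - 1 - j : ℕ) : ℝ) / n = 1 - (j + 1) / n := by
    rw [Nat.cast_sub (by omega), Nat.cast_sub (by omega)]
    field_simp
    ring
  have hy : 0 ≤ 1 - ((j : ℝ) + 1) / n := by
    rw [sub_nonneg, div_le_one hn]
    exact_mod_cast hj
  rw [hcomp]
  refine opNormSq_add_le_one_sub_mul _ _ u (by positivity) hy ?_
  rw [sub_sub_cancel]
  exact Set.Ioo_subset_Icc_self hu

theorem stochastic_domination_bst_general (n : ℕ) :
    ∀ t : ℝ,
      (((Finset.range n).filter (fun j : ℕ =>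
          t < opNormSq ((j : ℝ) / n) + opNormSq (((n - 1 - j : ℕ) : ℝ) / n))).card : ℝ) / n
        ≤ (volume {u : ℝ | u ∈ Set.Icc (0 : ℝ) 1 ∧ t < 1 - u * (1 - u)}).toReal := by
  intro t
  have hfinite : volume {u : ℝ | u ∈ Set.Icc (0 : ℝ) 1 ∧ t < 1 - u * (1 - u)} ≠ ⊤ :=
    ne_top_of_le_ne_top measure_Icc_lt_top.ne (measure_mono fun u hu => hu.1)
  refine card_div_le_volume_real hfinite fun j hj u hu => ?_
  obtain ⟨hjn, ht⟩ := Finset.mem_filter.1 hj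
  rw [Finset.mem_range] at hjn
  have hju : (j + 1 : ℝ) / n ≤ 1 := div_le_one_of_le₀ (by exact_mod_cast hjn) n.cast_nonneg
  exact ⟨⟨(by positivity : (0 : ℝ) ≤ j / n).trans hu.1.le, hu.2.le.trans hju⟩,
    ht.trans_le (opNormSq_add_le_of_mem_Ioo hjn hu)⟩

theorem stochastic_domination_bst (n : ℕ) (hn : 1 ≤ n) :
    ∀ t : ℝ,
      (((Finset.range n).filter (fun j : ℕ =>
          t < opNormSq ((j : ℝ) / n) + opNormSq (((n - 1 - j : ℕ) : ℝ) / n))).card : ℝ) / n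
        ≤ (volume {u : ℝ | u ∈ Set.Icc (0 : ℝ) 1 ∧ t < 1 - u * (1 - u)}).toReal :=
  stochastic_domination_bst_general n
end
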